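/- arXiv:1306.3508 — 3 statements merged into one kernel-verified Lean document; each statement's English description precedes it below -/
import Mathlib

section
/- Let (d₁, ..., dₙ) be an n-tuple of positive integers with even sum whose largest entry is d. If n ≥ d², then (d₁, ..., dₙ) is graphic, i.e., there exists a finite simple graph on n vertices whose vertex degrees are exactly d₁, ..., dₙ. -/
/-
Induction on the degree sum. Let `i` carry a largest entry `m` and `j` a largest entry among the
others; lowering both by one keeps the invariant `(max entry) ^ 2 ≤ #(positive entries)` and the
parity, so the smaller sequence has a realisation `G`. If `i` and `j` are not adjacent in `G`, add
the edge `ij`. Otherwise look for an edge `uv` with `u ∉ N[i]`, `v ∉ N[j]`: the 2-switch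
`ij, uv ↦ iu, jv` preserves all degrees and separates `i` from `j`. Such an edge exists, since
otherwise every non-isolated vertex lies in `N(i) ∪ N(j)` or next to `N(i) \ {j}`, which accounts
for fewer than `m ^ 2` vertices.
-/

open Finset

variable {V : Type*}

namespace SimpleGraph

lemma ncard_neighborSet_eq_degree (G : SimpleGraph V) (v : V) [Fintype (G.neighborSet v)] :
    (G.neighborSet v).ncard = G.degree v := by
  rw [← card_neighborFinset_eq_degree, neighborFinset_def, Set.ncard_eq_toFinset_card']

variable (G : SimpleGraph V) {a b c d x : V}

lemma neighborSet_sup_edge_left (hab : a ≠ b) :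
    (G ⊔ edge a b).neighborSet a = insert b (G.neighborSet a) := by
  ext x
  simp only [mem_neighborSet, sup_adj, edge_adj, Set.mem_insert_iff]
  grind

lemma neighborSet_sup_edge_of_ne (hxa : x ≠ a) (hxb : x ≠ b) :
    (G ⊔ edge a b).neighborSet x = G.neighborSet x := by
  ext y
  simp [edge_adj, hxa, hxb]

lemma ncard_neighborSet_sup_edge [Finite V] [DecidableEq V] (hab : a ≠ b) (h : ¬G.Adj a b)
    (x : V) : ((G ⊔ edge a b).neighborSet x).ncard =
      (G.neighborSet x).ncard + (Pi.single a 1 : V → ℕ) x + (Pi.single b 1 : V → ℕ) x := by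
  rcases eq_or_ne x a with rfl | hxa
  · rw [neighborSet_sup_edge_left G hab,
      Set.ncard_insert_of_notMem (show b ∉ G.neighborSet x from h)]
    simp [hab.symm]
  rcases eq_or_ne x b with rfl | hxb
  · rw [edge_comm, neighborSet_sup_edge_left G hab.symm,
      Set.ncard_insert_of_notMem (show a ∉ G.neighborSet x from fun h' => h h'.symm)]
    simp [hxa]
  · simp [neighborSet_sup_edge_of_ne G hxa hxb, hxa, hxb]

def switch (a b c d : V) : SimpleGraph V :=
  G.deleteEdges {s(a, b), s(c, d)} ⊔ edge a c ⊔ edge b d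

lemma switch_swap (a b c d : V) : G.switch a b c d = G.switch b a d c := by
  simp only [switch, Sym2.eq_swap (a := a), Sym2.eq_swap (a := c), sup_assoc, sup_comm (edge a c)]

lemma switch_comm (a b c d : V) : G.switch a b c d = G.switch c d a b := by
  simp only [switch, Set.pair_comm, edge_comm (s := a), edge_comm (s := b)]

variable {G}

lemma neighborSet_switch_left (hab : G.Adj a b) (hcd : G.Adj c d) (hac : ¬G.Adj a c)
    (hac' : a ≠ c) : (G.switch a b c d).neighborSet a = insert c (G.neighborSet a \ {b}) := by
  have had : a ≠ d := by rintro rfl; exact hac hcd.symm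
  have hbc : b ≠ c := by rintro rfl; exact hac hab
  ext x
  simp only [switch, mem_neighborSet, sup_adj, deleteEdges_adj, edge_adj, Set.mem_insert_iff,
    Set.mem_sdiff, Set.mem_singleton_iff, Sym2.eq_iff]
  grind [hab.ne]

lemma neighborSet_switch_of_ne (hxa : x ≠ a) (hxb : x ≠ b) (hxc : x ≠ c) (hxd : x ≠ d) :
    (G.switch a b c d).neighborSet x = G.neighborSet x := by
  ext y
  simp only [switch, mem_neighborSet, sup_adj, deleteEdges_adj, edge_adj, Set.mem_insert_iff,
    Set.mem_singleton_iff, Sym2.eq_iff]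
  grind

lemma ncard_neighborSet_switch [Finite V] (hab : G.Adj a b) (hcd : G.Adj c d) (hac : ¬G.Adj a c)
    (hbd : ¬G.Adj b d) (hac' : a ≠ c) (hbd' : b ≠ d) (x : V) :
    ((G.switch a b c d).neighborSet x).ncard = (G.neighborSet x).ncard := by
  have key : ∀ {a b c d : V}, G.Adj a b → G.Adj c d → ¬G.Adj a c → a ≠ c →
      ((G.switch a b c d).neighborSet a).ncard = (G.neighborSet a).ncard := by
    intro a b c d hab hcd hac hac'
    rw [neighborSet_switch_left hab hcd hac hac']
    exact Set.ncard_exchange hac hab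
  rcases eq_or_ne x a with rfl | hxa
  · exact key hab hcd hac hac'
  rcases eq_or_ne x b with rfl | hxb
  · rw [switch_swap]; exact key hab.symm hcd.symm hbd hbd'
  rcases eq_or_ne x c with rfl | hxc
  · rw [switch_comm]; exact key hcd hab (fun h => hac h.symm) hac'.symm
  rcases eq_or_ne x d with rfl | hxd
  · rw [switch_comm, switch_swap]; exact key hcd.symm hab.symm (fun h => hbd h.symm) hbd'.symm
  · rw [neighborSet_switch_of_ne hxa hxb hxc hxd]

lemma not_adj_switch (hab : G.Adj a b) (hcd : G.Adj c d) (hac : ¬G.Adj a c) :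
    ¬(G.switch a b c d).Adj a b := by
  simp only [switch, sup_adj, deleteEdges_adj, edge_adj, Set.mem_insert_iff,
    Set.mem_singleton_iff, Sym2.eq_iff]
  grind [hcd.ne, hcd.symm]

variable [Fintype V] [DecidableEq V] [DecidableRel G.Adj] {i j : V} {m : ℕ}

lemma exists_switch_of_sq_le_card (hij : G.Adj i j) (hΔ : ∀ v, G.degree v ≤ m)
    (hi : G.degree i < m) (hcard : m ^ 2 ≤ #{v | 0 < G.degree v}) :
    ∃ u v, G.Adj u v ∧ ¬G.Adj i u ∧ i ≠ u ∧ ¬G.Adj j v ∧ j ≠ v := by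
  by_contra! h
  set P : Finset V := {v | 0 < G.degree v}
  set E := (G.neighborFinset i).erase j
  have hcover : P \ (G.neighborFinset i ∪ G.neighborFinset j) ⊆
      E.biUnion fun x => G.neighborFinset x := by
    intro w hw
    simp only [P, mem_sdiff, mem_filter_univ, mem_union, mem_neighborFinset, not_or] at hw
    obtain ⟨hw, hiw, hjw⟩ := hw
    obtain ⟨x, hwx⟩ := G.degree_pos_iff_exists_adj w |>.mp hw
    have hix : G.Adj i x := by
      by_contra hix
      exact hiw (h x w hwx.symm hix (by rintro rfl; exact hiw hwx.symm) hjw ▸ hij)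
    simp only [E, mem_biUnion, mem_erase, mem_neighborFinset]
    exact ⟨x, ⟨by rintro rfl; exact hjw hwx.symm, hix⟩, hwx.symm⟩
  have hW : #(P \ (G.neighborFinset i ∪ G.neighborFinset j)) ≤ #E * m := calc
    _ ≤ ∑ x ∈ E, G.degree x := (card_le_card hcover).trans card_biUnion_le
    _ ≤ ∑ x ∈ E, m := sum_le_sum fun x _ => hΔ x
    _ = #E * m := by rw [sum_const, smul_eq_mul]
  have hE : #E + 1 = G.degree i := by
    rw [card_erase_add_one (G.mem_neighborFinset _ _ |>.mpr hij), card_neighborFinset_eq_degree]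
  have hN : #(G.neighborFinset i ∪ G.neighborFinset j) ≤ G.degree i + m :=
    (card_union_le _ _).trans (by simpa using hΔ j)
  have hP := card_le_card_sdiff_add_card (s := P) (t := G.neighborFinset i ∪ G.neighborFinset j)
  nlinarith

end SimpleGraph

def IsGraphic (f : V → ℕ) : Prop :=
  ∃ G : SimpleGraph V, ∀ v, (G.neighborSet v).ncard = f v

lemma isGraphic_zero : IsGraphic (0 : V → ℕ) :=
  ⟨⊥, fun v => by simp⟩

section Fintype

variable [Fintype V] {f g : V → ℕ}

lemma sq_sup_le_card_of_le_one (h : ∀ v, g v ≤ 1) : univ.sup g ^ 2 ≤ #{v | g v ≠ 0} := by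
  by_cases hg : ∃ v, g v ≠ 0
  · obtain ⟨v, hv⟩ := hg
    have : univ.sup g ≤ 1 := Finset.sup_le fun v _ => h v
    have : 0 < #{v | g v ≠ 0} := card_pos.mpr ⟨v, by simpa using hv⟩
    nlinarith
  · push Not at hg
    simp [hg]

variable [DecidableEq V] {i j : V}

lemma exists_ne_ne_zero_of_sq_sup_le (hf : f ≠ 0) (heven : Even (∑ v, f v))
    (hsq : univ.sup f ^ 2 ≤ #{v | f v ≠ 0}) (i : V) : ∃ j ≠ i, f j ≠ 0 := by
  by_contra! h
  have hsum : ∑ v, f v = f i := sum_eq_single i (fun v _ hv => h v hv) (by simp)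
  have hcard : #{v | f v ≠ 0} ≤ 1 :=
    card_le_one.mpr fun a ha b hb => by grind [mem_filter_univ]
  have hfi : f i ≤ 1 := by
    have := le_sup (f := f) (mem_univ i)
    nlinarith
  apply hf
  funext v
  rcases eq_or_ne v i with rfl | hvi
  · rw [hsum] at heven
    obtain ⟨k, hk⟩ := heven
    simp only [Pi.zero_apply]
    omega
  · exact h v hvi

lemma sq_sup_le_card_of_eq_add_single_add_single (hij : i ≠ j)
    (hf : f = g + Pi.single i 1 + Pi.single j 1) (hi : ∀ v, f v ≤ f i)
    (hj : ∀ v ≠ i, f v ≤ f j) (hsq : f i ^ 2 ≤ #{v | f v ≠ 0}) :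
    univ.sup g ^ 2 ≤ #{v | g v ≠ 0} := by
  have hfg (v : V) : f v = g v + (if v = i then 1 else 0) + (if v = j then 1 else 0) := by
    simp [hf, Pi.single_apply]
  have hgf (v : V) : g v ≤ f v := by grind
  rcases Nat.lt_or_ge (f i) 2 with hm | hm
  · exact sq_sup_le_card_of_le_one fun v => by grind
  rcases eq_or_lt_of_le (hi j) with hji | hji
  · calc univ.sup g ^ 2 ≤ f i ^ 2 := by
          gcongr; exact Finset.sup_le fun v _ => (hgf v).trans (hi v)
      _ ≤ #{v | f v ≠ 0} := hsq
      _ ≤ #{v | g v ≠ 0} := card_le_card fun v => by simp only [mem_filter_univ]; grind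
  · have hsup : univ.sup g ≤ f i - 1 := Finset.sup_le fun v _ => by grind
    have hpos : #{v | f v ≠ 0} ≤ #{v | g v ≠ 0} + 2 := calc
      _ ≤ #(({v | g v ≠ 0} : Finset V) ∪ {i, j}) := card_le_card fun v => by
          simp only [mem_union, mem_filter_univ, mem_insert, mem_singleton]; grind
      _ ≤ #{v | g v ≠ 0} + 2 := (card_union_le _ _).trans (by grw [card_le_two])
    have : (f i - 1) ^ 2 + 2 ≤ f i ^ 2 := by
      obtain ⟨k, hk⟩ := Nat.exists_eq_add_of_le hm
      rw [hk, show 2 + k - 1 = k + 1 by omega]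
      nlinarith
    calc univ.sup g ^ 2 ≤ (f i - 1) ^ 2 := by gcongr
      _ ≤ #{v | g v ≠ 0} := by omega

lemma exists_eq_add_single_add_single (hf : f ≠ 0) (heven : Even (∑ v, f v))
    (hsq : univ.sup f ^ 2 ≤ #{v | f v ≠ 0}) :
    ∃ i j g, i ≠ j ∧ f = g + Pi.single i 1 + Pi.single j 1 ∧ (∀ v, f v ≤ f i) ∧
      univ.sup g ^ 2 ≤ #{v | g v ≠ 0} := by
  obtain ⟨v₀, -⟩ : ∃ v, f v ≠ 0 := by simpa [funext_iff] using hf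
  obtain ⟨i, -, hi⟩ := exists_max_image univ f ⟨v₀, mem_univ v₀⟩
  obtain ⟨j₀, hj₀i, hj₀⟩ := exists_ne_ne_zero_of_sq_sup_le hf heven hsq i
  have hj₀ : j₀ ∈ univ.erase i := mem_erase.mpr ⟨hj₀i, mem_univ j₀⟩
  obtain ⟨j, hj, hjmax⟩ := exists_max_image (univ.erase i) f ⟨j₀, hj₀⟩
  have hfj : f j ≠ 0 := by grind
  have hsup : univ.sup f = f i := le_antisymm (Finset.sup_le hi) (le_sup (mem_univ i))
  have hf_eq : f = (f - Pi.single i 1 - Pi.single j 1) + Pi.single i 1 + Pi.single j 1 := by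
    funext v
    simp only [Pi.add_apply, Pi.sub_apply, Pi.single_apply]
    grind
  exact ⟨i, j, _, (ne_of_mem_erase hj).symm, hf_eq, fun v => hi v (mem_univ v),
    sq_sup_le_card_of_eq_add_single_add_single (ne_of_mem_erase hj).symm hf_eq
      (fun v => hi v (mem_univ v)) (fun v hv => hjmax v (mem_erase.mpr ⟨hv, mem_univ v⟩))
      (hsup ▸ hsq)⟩

lemma IsGraphic.add_single_add_single (hg : IsGraphic g) (hij : i ≠ j)
    (hf : f = g + Pi.single i 1 + Pi.single j 1) (hmax : ∀ v, f v ≤ f i)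
    (hcard : f i ^ 2 ≤ #{v | f v ≠ 0}) : IsGraphic f := by
  classical
  obtain ⟨G, hG⟩ := hg
  suffices ∃ G' : SimpleGraph V, ¬G'.Adj i j ∧ ∀ v, (G'.neighborSet v).ncard = g v by
    obtain ⟨G', hG'ij, hG'⟩ := this
    exact ⟨G' ⊔ SimpleGraph.edge i j, fun v => by
      rw [G'.ncard_neighborSet_sup_edge hij hG'ij, hG', hf, Pi.add_apply, Pi.add_apply]⟩
  by_cases hGij : G.Adj i j
  swap
  · exact ⟨G, hGij, hG⟩
  have hdeg (v : V) : G.degree v = g v := by rw [← hG, G.ncard_neighborSet_eq_degree]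
  have hfg (v : V) : f v = g v + (if v = i then 1 else 0) + (if v = j then 1 else 0) := by
    simp [hf, Pi.single_apply]
  have hpos : #{v | f v ≠ 0} ≤ #{v | 0 < G.degree v} := card_le_card fun v => by
    simp only [mem_filter_univ]
    intro hv
    rcases eq_or_ne v i with rfl | hvi
    · exact G.degree_pos_iff_exists_adj v |>.mpr ⟨j, hGij⟩
    rcases eq_or_ne v j with rfl | hvj
    · exact G.degree_pos_iff_exists_adj v |>.mpr ⟨i, hGij.symm⟩
    · grind
  obtain ⟨u, v, huv, hiu, hiu', hjv, hjv'⟩ := G.exists_switch_of_sq_le_card hGij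
    (fun v => by grind) (by grind) (hcard.trans hpos)
  exact ⟨G.switch i j u v, G.not_adj_switch hGij huv hiu,
    fun x => by rw [G.ncard_neighborSet_switch hGij huv hiu hjv hiu' hjv', hG]⟩

theorem isGraphic_of_sq_sup_le_card (f : V → ℕ) (heven : Even (∑ v, f v))
    (hsq : univ.sup f ^ 2 ≤ #{v | f v ≠ 0}) : IsGraphic f := by
  induction hs : ∑ v, f v using Nat.strong_induction_on generalizing f with
  | _ s ih =>
  obtain rfl | hf := eq_or_ne f 0
  · exact isGraphic_zero
  obtain ⟨i, j, g, hij, rfl, hmax, hg⟩ := exists_eq_add_single_add_single hf heven hsq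
  have hsum : ∑ v, (g + Pi.single i 1 + Pi.single j 1 : V → ℕ) v = ∑ v, g v + 2 := by
    simp [sum_add_distrib]
  rw [hsum] at heven hs
  refine (ih _ (by omega) g ?_ hg rfl).add_single_add_single hij rfl hmax (le_trans ?_ hsq)
  · simpa [Nat.even_add] using heven
  · gcongr
    exact le_sup (mem_univ i)

end Fintype

theorem graphic_of_length_ge_sq_max_general (d : ℕ) (D : List ℕ)
    (hpos : ∀ x ∈ D, 1 ≤ x)
    (heven : Even D.sum)
    (hmax : ∀ x ∈ D, x ≤ d)
    (hn : d ^ 2 ≤ D.length) :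
    ∃ G : SimpleGraph (Fin D.length),
      ∀ i : Fin D.length, (G.neighborSet i).ncard = D.get i := by
  refine isGraphic_of_sq_sup_le_card D.get (by rwa [← List.sum_ofFn, List.ofFn_get]) ?_
  have hsup : univ.sup D.get ≤ d := Finset.sup_le fun i _ => hmax _ (D.get_mem i)
  have hall : #{i | D.get i ≠ 0} = D.length := by
    rw [filter_true_of_mem fun i _ => Nat.one_le_iff_ne_zero.mp (hpos _ (D.get_mem i)),
      card_univ, Fintype.card_fin]
  rw [hall]
  exact (Nat.pow_le_pow_left hsup 2).trans hn

/-- A positive `n`-tuple with even sum and largest entry `d` is graphic provided `n ≥ d²`: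
there is a finite simple graph whose vertex degrees are exactly the entries of the tuple. -/
theorem graphic_of_length_ge_sq_max (d : ℕ) (D : List ℕ)
    (hpos : ∀ x ∈ D, 1 ≤ x)
    (heven : Even D.sum)
    (hd : d ∈ D) (hmax : ∀ x ∈ D, x ≤ d)
    (hn : d ^ 2 ≤ D.length) :
    ∃ G : SimpleGraph (Fin D.length),
      ∀ i : Fin D.length, (G.neighborSet i).ncard = D.get i :=
  graphic_of_length_ge_sq_max_general d D hpos heven hmax hn
end

section
/- Let (Q, ≤) be a quasi-order. The relation ≤ on Q-labelled graphic sequences (defined by D₁ ≤ D₂ iff there exist Q-labelled graphs G₁ realizing D₁ and G₂ realizing D₂ with G₁ a labelled induced subgraph of G₂) is transitive: if D₁ ≤ D₂ and D₂ ≤ D₃, then D₁ ≤ D₃. -/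
/-- A `Q`-labelled graph `(G, f)` on `Fin D.length` realizes the `Q`-labelled sequence `D`:
the degree of the `i`-th vertex is the `i`-th degree entry and its label is the `i`-th label. -/
def LabelledRealizes {Q : Type*} (D : List (ℕ × Q))
    (G : SimpleGraph (Fin D.length)) (f : Fin D.length → Q) : Prop :=
  ∀ i : Fin D.length, (G.neighborSet i).ncard = (D.get i).1 ∧ f i = (D.get i).2

/-- `(G, fG)` is a labelled induced subgraph of `(H, fH)`: there is an injection preserving
adjacency and non-adjacency, with labels increasing along it. -/
def LabelledInducedSubgraph {Q : Type*} [Preorder Q] {n m : ℕ}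
    (G : SimpleGraph (Fin n)) (fG : Fin n → Q)
    (H : SimpleGraph (Fin m)) (fH : Fin m → Q) : Prop :=
  ∃ φ : Fin n → Fin m, Function.Injective φ ∧
    (∀ x y : Fin n, G.Adj x y ↔ H.Adj (φ x) (φ y)) ∧
    (∀ x : Fin n, fG x ≤ fH (φ x))

/-- The order on `Q`-labelled graphic sequences: `D₁ ≤ D₂` iff some labelled realization of `D₁`
is a labelled induced subgraph of some labelled realization of `D₂`. -/
def LabelledSeqLE {Q : Type*} [Preorder Q] (D₁ D₂ : List (ℕ × Q)) : Prop :=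
  ∃ (G₁ : SimpleGraph (Fin D₁.length)) (f₁ : Fin D₁.length → Q)
    (G₂ : SimpleGraph (Fin D₂.length)) (f₂ : Fin D₂.length → Q),
      LabelledRealizes D₁ G₁ f₁ ∧ LabelledRealizes D₂ G₂ f₂ ∧
      LabelledInducedSubgraph G₁ f₁ G₂ f₂

/-! If `D₁ ≤ D₂` via realizations `G₁ ⊆ G₂` and `D₂ ≤ D₃` via realizations `G₂' ⊆ G₃`, the
realizations `G₂` and `G₂'` of `D₂` may differ. Replace the induced copy of `G₂'` in `G₃` by a copy
of `G₂`, keeping every edge with an endpoint outside the copy: a vertex of the copy loses its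
`G₂'`-neighbours and gains as many `G₂`-neighbours, so the new graph still realizes `D₃`, and it
contains `G₁` through `G₂`. -/

namespace SimpleGraph

variable {V W : Type*}

def replaceInduced (H : SimpleGraph W) (ψ : V ↪ W) (G : SimpleGraph V) : SimpleGraph W :=
  G.map ψ ⊔ H \ (⊤ : SimpleGraph V).map ψ

variable {H : SimpleGraph W} {ψ : V ↪ W} {G : SimpleGraph V}

@[simp]
theorem replaceInduced_adj_apply {a b : V} :
    (H.replaceInduced ψ G).Adj (ψ a) (ψ b) ↔ G.Adj a b := by
  simp only [replaceInduced, sup_adj, sdiff_adj, map_adj_apply, top_adj, not_not,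
    or_iff_left_iff_imp, and_imp]
  rintro h rfl
  exact (h.ne rfl).elim

theorem replaceInduced_adj_of_notMem_range {x : W} (hx : x ∉ Set.range ψ) (y : W) :
    (H.replaceInduced ψ G).Adj x y ↔ H.Adj x y := by
  simp only [replaceInduced, sup_adj, sdiff_adj, map_adj]
  grind

theorem comap_replaceInduced : (H.replaceInduced ψ G).comap ψ = G := by
  ext; simp

theorem ncard_neighborSet_apply_eq_add [Finite W] (K : SimpleGraph W) (ψ : V ↪ W) (u : V) :
    (K.neighborSet (ψ u)).ncard =
      ((K.comap ψ).neighborSet u).ncard + (K.neighborSet (ψ u) \ Set.range ψ).ncard := by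
  have : K.neighborSet (ψ u) ∩ Set.range ψ = ψ '' (K.comap ψ).neighborSet u :=
    Set.image_preimage_eq_inter_range.symm
  rw [← Set.ncard_inter_add_ncard_sdiff_eq_ncard _ (Set.range ψ), this,
    Set.ncard_image_of_injective _ ψ.injective]

theorem ncard_neighborSet_replaceInduced [Finite W]
    (hdeg : ∀ u, (G.neighborSet u).ncard = ((H.comap ψ).neighborSet u).ncard) (x : W) :
    ((H.replaceInduced ψ G).neighborSet x).ncard = (H.neighborSet x).ncard := by
  have houtside : ∀ x, (H.replaceInduced ψ G).neighborSet x \ Set.range ψ =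
      H.neighborSet x \ Set.range ψ := fun x => by
    ext y
    simp only [Set.mem_sdiff, mem_neighborSet, and_congr_left_iff]
    intro hy
    rw [adj_comm, replaceInduced_adj_of_notMem_range hy, adj_comm]
  by_cases hx : x ∈ Set.range ψ
  · obtain ⟨u, rfl⟩ := hx
    rw [ncard_neighborSet_apply_eq_add, ncard_neighborSet_apply_eq_add H, comap_replaceInduced,
      hdeg, houtside]
  · congr 1
    ext y
    exact replaceInduced_adj_of_notMem_range hx y

end SimpleGraph

section Labelled

variable {Q : Type*}

theorem LabelledRealizes.ncard_neighborSet_eq {D : List (ℕ × Q)}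
    {G G' : SimpleGraph (Fin D.length)} {f f' : Fin D.length → Q}
    (h : LabelledRealizes D G f) (h' : LabelledRealizes D G' f') (i : Fin D.length) :
    (G.neighborSet i).ncard = (G'.neighborSet i).ncard :=
  (h i).1.trans (h' i).1.symm

theorem LabelledRealizes.labelling_eq {D : List (ℕ × Q)}
    {G G' : SimpleGraph (Fin D.length)} {f f' : Fin D.length → Q}
    (h : LabelledRealizes D G f) (h' : LabelledRealizes D G' f') : f = f' :=
  funext fun i => (h i).2.trans (h' i).2.symm

variable [Preorder Q]

theorem LabelledInducedSubgraph.trans {n m k : ℕ}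
    {G₁ : SimpleGraph (Fin n)} {f₁ : Fin n → Q} {G₂ : SimpleGraph (Fin m)} {f₂ : Fin m → Q}
    {G₃ : SimpleGraph (Fin k)} {f₃ : Fin k → Q}
    (h₁₂ : LabelledInducedSubgraph G₁ f₁ G₂ f₂) (h₂₃ : LabelledInducedSubgraph G₂ f₂ G₃ f₃) :
    LabelledInducedSubgraph G₁ f₁ G₃ f₃ := by
  obtain ⟨φ, hφ, hφadj, hφlabel⟩ := h₁₂
  obtain ⟨ψ, hψ, hψadj, hψlabel⟩ := h₂₃
  exact ⟨ψ ∘ φ, hψ.comp hφ, fun x y => (hφadj x y).trans (hψadj _ _),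
    fun x => (hφlabel x).trans (hψlabel _)⟩

theorem LabelledInducedSubgraph.exists_of_realizes {D E : List (ℕ × Q)}
    {G G' : SimpleGraph (Fin D.length)} {f f' : Fin D.length → Q}
    {H : SimpleGraph (Fin E.length)} {g : Fin E.length → Q}
    (hG : LabelledRealizes D G f) (hG' : LabelledRealizes D G' f')
    (hH : LabelledRealizes E H g) (hsub : LabelledInducedSubgraph G' f' H g) :
    ∃ H' : SimpleGraph (Fin E.length),
      LabelledRealizes E H' g ∧ LabelledInducedSubgraph G f H' g := by
  obtain ⟨ψ, hψ, hψadj, hψlabel⟩ := hsub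
  let ψ' : Fin D.length ↪ Fin E.length := ⟨ψ, hψ⟩
  have hcomap : H.comap ψ' = G' := by
    ext a b
    exact (hψadj a b).symm
  have hdeg := SimpleGraph.ncard_neighborSet_replaceInduced (H := H) (ψ := ψ')
    (hcomap ▸ hG.ncard_neighborSet_eq hG')
  refine ⟨H.replaceInduced ψ' G, fun x => ⟨(hdeg x).trans (hH x).1, (hH x).2⟩,
    ψ, hψ, fun a b => SimpleGraph.replaceInduced_adj_apply.symm, ?_⟩
  rwa [hG.labelling_eq hG']

end Labelled

/-- The relation `≤` on `Q`-labelled graphic sequences is transitive. -/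
theorem labelledSeqLE_trans {Q : Type*} [Preorder Q] (D₁ D₂ D₃ : List (ℕ × Q))
    (h12 : LabelledSeqLE D₁ D₂) (h23 : LabelledSeqLE D₂ D₃) :
    LabelledSeqLE D₁ D₃ := by
  obtain ⟨G₁, f₁, G₂, f₂, hG₁, hG₂, h₁₂⟩ := h12
  obtain ⟨G₂', f₂', G₃, f₃, hG₂', hG₃, h₂₃⟩ := h23
  obtain ⟨H, hH, h₂H⟩ := h₂₃.exists_of_realizes hG₂ hG₂' hG₃
  exact ⟨G₁, f₁, H, f₃, hG₁, hH, h₁₂.trans h₂H⟩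
end

section
/- Let N be a fixed positive integer. If D₁, D₂, ... is an infinite sequence of graphic sequences such that no entry in any Dₖ exceeds N, then there exist indices i < j such that Dᵢ ≤ Dⱼ, i.e., there exist a graph G₁ realizing Dᵢ and a graph G₂ realizing Dⱼ such that G₁ is an induced subgraph of G₂. -/
/-- A graph `G` on `Fin D.length` realizes the integer sequence `D`:
the degree of the `i`-th vertex is the `i`-th entry of `D`. -/
def RealizesSeq (D : List ℕ) (G : SimpleGraph (Fin D.length)) : Prop :=
  ∀ i : Fin D.length, (G.neighborSet i).ncard = D.get i

/-- The order on graphic sequences: `D₁ ≤ D₂` iff some realization of `D₁` is an induced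
subgraph of some realization of `D₂`. -/
def SeqLE (D₁ D₂ : List ℕ) : Prop :=
  ∃ (G₁ : SimpleGraph (Fin D₁.length)) (G₂ : SimpleGraph (Fin D₂.length)),
    RealizesSeq D₁ G₁ ∧ RealizesSeq D₂ G₂ ∧
    ∃ φ : Fin D₁.length → Fin D₂.length, Function.Injective φ ∧
      ∀ x y : Fin D₁.length, G₁.Adj x y ↔ G₂.Adj (φ x) (φ y)

/-!
Write `c_D(x)` for the multiplicity of `x` in `D`. Dickson's lemma together with the pigeonhole
principle on residues yields `i < j` with `c_{Dᵢ}(x) ≤ c_{Dⱼ}(x)` and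
`c_{Dᵢ}(x) ≡ c_{Dⱼ}(x) (mod x + 1)` for every `x ≤ N`; larger `x` do not occur at all.
Then `Dⱼ` is `Dᵢ` together with `(c_{Dⱼ}(x) - c_{Dᵢ}(x)) / (x + 1)` blocks of `x + 1` entries `x`,
each realized by a clique `K_{x+1}`. Adding these cliques disjointly to a realization of `Dᵢ` and
relabelling the vertices gives a realization of `Dⱼ` containing it as an induced subgraph.
-/

theorem List.card_subtype_get_eq_count {α : Type*} [DecidableEq α] (L : List α) (x : α) :
    Fintype.card {t : Fin L.length // L.get t = x} = L.count x := by
  have hL : (L : Multiset α) = Finset.univ.val.map L.get := by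
    rw [Fin.univ_val_map, List.ofFn_get]
  rw [Fintype.card_subtype, ← Multiset.coe_count, hL, Multiset.count_map, Finset.card_def,
    Finset.filter_val]
  simp_rw [eq_comm]

namespace SimpleGraph

variable {V W ι : Type*} [Fintype V] [Fintype W]

noncomputable def countDegree (G : SimpleGraph V) (x : ℕ) : ℕ :=
  Fintype.card {v // (G.neighborSet v).ncard = x}

theorem countDegree_sum (G : SimpleGraph V) (H : SimpleGraph W) (x : ℕ) :
    (G ⊕g H).countDegree x = G.countDegree x + H.countDegree x := by
  rw [countDegree, Fintype.card_congr Equiv.subtypeSum, Fintype.card_sum]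
  simp only [neighborSet_sum_inl, neighborSet_sum_inr,
    Set.ncard_image_of_injective _ Sum.inl_injective,
    Set.ncard_image_of_injective _ Sum.inr_injective]
  rfl

def cliqueUnion (d : ι → ℕ) : SimpleGraph (Σ i, Fin (d i + 1)) where
  Adj a b := a.1 = b.1 ∧ a ≠ b
  symm := ⟨fun _ _ h => ⟨h.1.symm, h.2.symm⟩⟩
  loopless := ⟨fun _ h => h.2 rfl⟩

theorem neighborSet_cliqueUnion (d : ι → ℕ) (i : ι) (r : Fin (d i + 1)) :
    (cliqueUnion d).neighborSet ⟨i, r⟩ = Sigma.mk i '' ({r}ᶜ : Set (Fin (d i + 1))) := by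
  ext b
  constructor
  · obtain ⟨j, s⟩ := b
    rintro ⟨rfl : i = j, hne⟩
    exact ⟨s, fun hs => hne (by rw [Set.mem_singleton_iff.1 hs]), rfl⟩
  · rintro ⟨s, hs, rfl⟩
    exact ⟨rfl, fun h => hs (sigma_mk_injective h).symm⟩

theorem ncard_neighborSet_cliqueUnion (d : ι → ℕ) (a : Σ i, Fin (d i + 1)) :
    ((cliqueUnion d).neighborSet a).ncard = d a.1 := by
  rw [neighborSet_cliqueUnion, Set.ncard_image_of_injective _ sigma_mk_injective,
    Set.ncard_compl, Set.ncard_singleton]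
  simp

theorem countDegree_cliqueUnion [Fintype ι] (d : ι → ℕ) (x : ℕ) :
    (cliqueUnion d).countDegree x = Fintype.card {i // d i = x} * (x + 1) := by
  rw [countDegree, Fintype.card_congr (Equiv.subtypeEquivRight fun a => by
      rw [ncard_neighborSet_cliqueUnion]),
    Fintype.card_congr (Equiv.subtypeSigmaEquiv _ fun i => d i = x), Fintype.card_sigma]
  simp only [Fintype.card_fin, fun i : {i // d i = x} => i.2, Finset.sum_const, smul_eq_mul,
    Finset.card_univ]

theorem exists_realizesSeq_comap_equiv {G : SimpleGraph V} {D : List ℕ}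
    (h : ∀ x, G.countDegree x = D.count x) :
    ∃ e : Fin D.length ≃ V, RealizesSeq D (G.comap e) := by
  let e : Fin D.length ≃ V := Equiv.ofFiberEquiv fun x =>
    Fintype.equivOfCardEq ((D.card_subtype_get_eq_count x).trans (h x).symm)
  refine ⟨e, fun t => ?_⟩
  rw [neighborSet_comap, ← e.image_symm_eq_preimage,
    Set.ncard_image_of_injective _ e.symm.injective]
  exact Equiv.ofFiberEquiv_map (g := fun v => (G.neighborSet v).ncard) _ t

end SimpleGraph

open SimpleGraph

theorem RealizesSeq.countDegree_eq {D : List ℕ} {G : SimpleGraph (Fin D.length)}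
    (h : RealizesSeq D G) (x : ℕ) : G.countDegree x = D.count x := by
  rw [countDegree, ← D.card_subtype_get_eq_count]
  exact Fintype.card_congr (Equiv.subtypeEquivRight fun v => by rw [h v])

theorem SeqLE.of_count_eq_add_countDegree {W : Type*} [Fintype W] {D₁ D₂ : List ℕ}
    {G₁ : SimpleGraph (Fin D₁.length)} (h₁ : RealizesSeq D₁ G₁) (H : SimpleGraph W)
    (h : ∀ x, D₂.count x = D₁.count x + H.countDegree x) : SeqLE D₁ D₂ := by
  obtain ⟨e, he⟩ := exists_realizesSeq_comap_equiv (G := G₁ ⊕g H) (D := D₂) fun x => by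
    rw [countDegree_sum, h₁.countDegree_eq, h]
  refine ⟨G₁, _, h₁, he, e.symm ∘ Sum.inl, e.symm.injective.comp Sum.inl_injective, fun x y => ?_⟩
  simp

theorem SeqLE.of_count_le_of_modEq {D₁ D₂ : List ℕ} {G₁ : SimpleGraph (Fin D₁.length)}
    (h₁ : RealizesSeq D₁ G₁)
    (h : ∀ x, D₁.count x ≤ D₂.count x ∧ D₁.count x ≡ D₂.count x [MOD x + 1]) :
    SeqLE D₁ D₂ := by
  let q : ℕ →₀ ℕ := Finsupp.onFinset D₂.toFinset (fun x => (D₂.count x - D₁.count x) / (x + 1))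
    fun x hx => List.mem_toFinset.2 <| List.count_pos_iff.1 <|
      Nat.pos_of_ne_zero fun h0 => hx (by rw [h0, Nat.zero_sub, Nat.zero_div])
  let L := (Finsupp.toMultiset q).toList
  refine .of_count_eq_add_countDegree h₁ (cliqueUnion L.get) fun x => ?_
  have hL : L.count x = (D₂.count x - D₁.count x) / (x + 1) := by
    rw [← Multiset.coe_count, Multiset.coe_toList, Finsupp.count_toMultiset,
      Finsupp.onFinset_apply]
  rw [countDegree_cliqueUnion, L.card_subtype_get_eq_count, hL,
    Nat.div_mul_cancel ((Nat.modEq_iff_dvd' (h x).1).1 (h x).2), Nat.add_sub_cancel' (h x).1]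

theorem exists_lt_forall_le_and_modEq {ι : Type*} [Finite ι] (m : ι → ℕ) [∀ i, NeZero (m i)]
    (c : ℕ → ι → ℕ) : ∃ a b, a < b ∧ ∀ i, c a i ≤ c b i ∧ c a i ≡ c b i [MOD m i] := by
  obtain ⟨a, b, hab, hle, hmod⟩ := (wellQuasiOrdered_le.prod (Finite.wellQuasiOrdered (· = ·)))
    fun k => (c k, fun i => (c k i : ZMod (m i)))
  exact ⟨a, b, hab, fun i => ⟨hle i, (ZMod.natCast_eq_natCast_iff ..).1 (congrFun hmod i)⟩⟩

theorem bounded_rao_general (N : ℕ)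
    (D : ℕ → List ℕ)
    (hgraphic : ∀ k, ∃ G : SimpleGraph (Fin (D k).length), RealizesSeq (D k) G)
    (hbound : ∀ k, ∀ x ∈ D k, x ≤ N) :
    ∃ i j : ℕ, i < j ∧ SeqLE (D i) (D j) := by
  obtain ⟨i, j, hij, hc⟩ := exists_lt_forall_le_and_modEq (fun x : Fin (N + 1) => x.1 + 1)
    fun k x => (D k).count x.1
  obtain ⟨G, hG⟩ := hgraphic i
  refine ⟨i, j, hij, SeqLE.of_count_le_of_modEq hG fun x => ?_⟩
  by_cases hx : x ≤ N
  · exact hc ⟨x, by omega⟩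
  · have hcount (k : ℕ) : (D k).count x = 0 := List.count_eq_zero.2 fun hm => hx (hbound k x hm)
    rw [hcount, hcount]
    exact ⟨le_rfl, rfl⟩

/-- Bounded case of S. B. Rao's conjecture: if `D₁, D₂, …` are graphic sequences with no
entry exceeding `N`, then `Dᵢ ≤ Dⱼ` for some `i < j`. -/
theorem bounded_rao (N : ℕ) (hN : 0 < N)
    (D : ℕ → List ℕ)
    (hsorted : ∀ k, (D k).Pairwise (· ≥ ·))
    (hpos : ∀ k, ∀ x ∈ D k, 1 ≤ x)
    (hgraphic : ∀ k, ∃ G : SimpleGraph (Fin (D k).length), RealizesSeq (D k) G)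
    (hbound : ∀ k, ∀ x ∈ D k, x ≤ N) :
    ∃ i j : ℕ, i < j ∧ SeqLE (D i) (D j) :=
  bounded_rao_general N D hgraphic hbound
end
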